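/- SELECT DISTINCT is a special case of CONSTRUCT: for any pattern P, finite set of variables S ⊆ V(P) viewed as a query graph of isolated variable nodes, and data graph G, the value of SELECT DISTINCT S WHERE P over G equals the value of CONSTRUCT S WHERE P over G. -/

import Mathlib

universe u

structure RDFGraph (A : Type u) where
  N : Set A
  T : Set (A × A × A)
  subj_mem : ∀ t ∈ T, t.1 ∈ N
  obj_mem : ∀ t ∈ T, t.2.2 ∈ N

namespace RDFGraph

variable {A : Type u}

/-- The labels of a graph: its nodes together with the predicates of its triples. -/
def labels (X : RDFGraph A) : Set A :=
  X.N ∪ {p | ∃ t ∈ X.T, t.2.1 = p}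

/-- Componentwise union of graphs. -/
def union (X1 X2 : RDFGraph A) : RDFGraph A where
  N := X1.N ∪ X2.N
  T := X1.T ∪ X2.T
  subj_mem := by
    rintro t (h | h)
    · exact Or.inl (X1.subj_mem t h)
    · exact Or.inr (X2.subj_mem t h)
  obj_mem := by
    rintro t (h | h)
    · exact Or.inl (X1.obj_mem t h)
    · exact Or.inr (X2.obj_mem t h)

/-- Componentwise intersection of graphs. -/
def inter (X1 X2 : RDFGraph A) : RDFGraph A where
  N := X1.N ∩ X2.N
  T := X1.T ∩ X2.T
  subj_mem := fun t h => ⟨X1.subj_mem t h.1, X2.subj_mem t h.2⟩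
  obj_mem := fun t h => ⟨X1.obj_mem t h.1, X2.obj_mem t h.2⟩

/-- `X'` is a subgraph of `X`. -/
def Subgraph (X' X : RDFGraph A) : Prop := X'.N ⊆ X.N ∧ X'.T ⊆ X.T

end RDFGraph

variable {A : Type u}

/-- A morphism of graphs on `A` : a partial function (modelled as an `Option`-valued
function, `none` meaning undefined, and undefined outside the labels of the domain)
from the labels of `X` to the labels of `Y`, preserving nodes and triples. -/
def IsMorphism (X Y : RDFGraph A) (f : A → Option A) : Prop :=
  (∀ x, x ∉ X.labels → f x = none) ∧
  (∀ x y, f x = some y → y ∈ Y.labels) ∧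
  (∀ n ∈ X.N, ∀ y, f n = some y → y ∈ Y.N) ∧
  (∀ t ∈ X.T, ∀ s' p' o', f t.1 = some s' → f t.2.1 = some p' → f t.2.2 = some o' →
    ((s', p', o') : A × A × A) ∈ Y.T)

/-- Composition of partial functions: defined iff both steps are defined. -/
def pcomp (g f : A → Option A) : A → Option A := fun x => (f x).bind g

open Classical in
/-- The identity partial function on the labels of `X`. -/
noncomputable def idOn (X : RDFGraph A) : A → Option A :=
  fun x => if x ∈ X.labels then some x else none

open Classical in
/-- Restriction of a partial function to the labels of `X'`. -/
noncomputable def restrictMap (X' : RDFGraph A) (f : A → Option A) : A → Option A :=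
  fun x => if x ∈ X'.labels then f x else none

/-- Labels are built from three disjoint countably infinite sets:
resource identifiers `i`, blanks `b` and variables `v`. -/
inductive Lbl : Type where
  | i : ℕ → Lbl
  | b : ℕ → Lbl
  | v : ℕ → Lbl
deriving DecidableEq

/-- Being a resource identifier. -/
def Lbl.isI : Lbl → Prop
  | .i _ => True
  | _ => False

/-- Being a variable. -/
def Lbl.isV : Lbl → Prop
  | .v _ => True
  | _ => False

/-- A data graph is a (finite) graph whose labels are resource identifiers or blanks. -/
def IsDataGraph (Y : RDFGraph Lbl) : Prop := ∀ x ∈ Y.labels, ¬ x.isV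

/-- A query graph is a finite graph on `Lbl`. -/
def IsQueryGraph (X : RDFGraph Lbl) : Prop := X.N.Finite ∧ X.T.Finite

/-- A mapping from a query graph `X` to a data graph `Y` is a graph morphism fixing
the resource identifiers. -/
def IsMapping (X Y : RDFGraph Lbl) (m : Lbl → Option Lbl) : Prop :=
  IsMorphism X Y m ∧ ∀ x ∈ X.labels, x.isI → m x = some x

/-- The blanks and variables among the labels of `X`. -/
def bvLabels (X : RDFGraph Lbl) : Set Lbl := {x | x ∈ X.labels ∧ ¬ x.isI}

/-- Two mappings are compatible if they agree (including definedness) on the common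
blanks and variables of their domains. -/
def Compatible (X1 X2 : RDFGraph Lbl) (m1 m2 : Lbl → Option Lbl) : Prop :=
  ∀ x ∈ bvLabels X1 ∩ bvLabels X2, m1 x = m2 x

open Classical in
/-- The join of two compatible mappings: it coincides with `m1` on the labels of `X1`
and with `m2` elsewhere. -/
noncomputable def joinMap (X1 : RDFGraph Lbl) (m1 m2 : Lbl → Option Lbl) : Lbl → Option Lbl :=
  fun x => if x ∈ X1.labels then m1 x else m2 x

/-- Join of two sets of mappings. -/
noncomputable def JoinSet (X1 X2 : RDFGraph Lbl) (M1 M2 : Set (Lbl → Option Lbl)) :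
    Set (Lbl → Option Lbl) :=
  {m | ∃ m1 ∈ M1, ∃ m2 ∈ M2, Compatible X1 X2 m1 m2 ∧ m = joinMap X1 m1 m2}

/-- Restriction of a set of mappings to a subgraph `X'`. -/
noncomputable def RestrictSet (X' : RDFGraph Lbl) (M : Set (Lbl → Option Lbl)) :
    Set (Lbl → Option Lbl) :=
  (restrictMap X') '' M

open Classical in
/-- Extension by undefined functions `Ext_⊥(m, X')`: new labels in `I` are fixed,
new blanks and variables are left undefined. -/
noncomputable def extBot (X X' : RDFGraph Lbl) (m : Lbl → Option Lbl) : Lbl → Option Lbl :=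
  fun x => if x ∈ X.labels then m x else if x ∈ X'.labels ∧ x.isI then some x else none

/-- Union of two sets of mappings: set-theoretic union of their extensions by
undefined functions to the union of their domains. -/
noncomputable def UnionSet (X1 X2 : RDFGraph Lbl) (M1 M2 : Set (Lbl → Option Lbl)) :
    Set (Lbl → Option Lbl) :=
  (extBot X1 (X1.union X2)) '' M1 ∪ (extBot X2 (X1.union X2)) '' M2

/-- A total mapping: a mapping defined on all the labels of its domain. -/
def TotalMapping (X Y : RDFGraph Lbl) (m : Lbl → Option Lbl) : Prop :=
  IsMapping X Y m ∧ ∀ x ∈ X.labels, m x ≠ none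

/-- The query graph made of a finite set of variables as isolated nodes. -/
def varGraph (S : Set ℕ) : RDFGraph Lbl where
  N := Lbl.v '' S
  T := ∅
  subj_mem := fun t h => h.elim
  obj_mem := fun t h => h.elim

theorem restrictMap_extBot {X X' X'' : RDFGraph Lbl} (h : X'.labels ⊆ X.labels)
    (m : Lbl → Option Lbl) : restrictMap X' (extBot X X'' m) = restrictMap X' m := by
  funext x
  by_cases hx : x ∈ X'.labels
  · simp [restrictMap, extBot, hx, h hx]
  · simp [restrictMap, hx]

theorem selectDistinct_eq_construct_general (X : RDFGraph Lbl) (S : Set ℕ)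
    (M : Set (Lbl → Option Lbl))
    (hS : (varGraph S).labels ⊆ X.labels) :
    RestrictSet (varGraph S) ((extBot X (X.union (varGraph S))) '' M) =
      RestrictSet (varGraph S) M := by
  simp only [RestrictSet, Set.image_image, restrictMap_extBot hS]

/-- SELECT DISTINCT is a special case of CONSTRUCT: when the construct template is the
set `S` of variables viewed as a query graph of isolated variable nodes (so that it has
no blanks nor resource identifiers, and its variables already occur in the pattern),
the extension step adds nothing and the value of `CONSTRUCT S WHERE P` over `G`
equals the value `Restrict(⟦P⟧_G, S)` of `SELECT DISTINCT S WHERE P` over `G`. -/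
theorem selectDistinct_eq_construct (X Y : RDFGraph Lbl) (S : Set ℕ)
    (M : Set (Lbl → Option Lbl))
    (hS : (varGraph S).labels ⊆ X.labels)
    (hM : ∀ m ∈ M, IsMapping X Y m) :
    RestrictSet (varGraph S) ((extBot X (X.union (varGraph S))) '' M) =
      RestrictSet (varGraph S) M :=
  selectDistinct_eq_construct_general X S M hS
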